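/- Every triple of the form (L_a, −ε·L_{a+εb}, L_b) with a, b odd coprime integers and ε ∈ {±1} can be transformed by a finite sequence of mutations and sign changes into the triple (1, 2, 1). -/

import Mathlib

/-!
Binet's formula `L_n = φ^n + ψ^n` gives `L_{-n} = (-1)^n L_n` and
`L_m L_n = L_{m+n} + (-1)^n L_{m-n}`. For odd `b` these identities make single mutations and
sign changes realise, on the triples `(L_a, L_{a-b}, L_b)`, the switch between `ε = -1` and
`ε = 1` and the moves `(a, b) ↦ (-a, b), (a, -b), (a - 2b, b), (a, b - 2a)`. These moves run the
Euclidean algorithm on odd coprime `a, b`, decreasing `|a| + |b|` until `(a, b) = (1, 1)`, whose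
triple is `(1, 2, 1)`.
-/

/-- Fibonacci numbers extended to all integer indices. -/
def fibZ : ℤ → ℤ
  | Int.ofNat n => Nat.fib n
  | Int.negSucc n => (-1) ^ n * Nat.fib (n + 1)

/-- Lucas numbers extended to all integer indices: `L_n = F_{n−1} + F_{n+1}`. -/
def lucZ (n : ℤ) : ℤ := fibZ (n - 1) + fibZ (n + 1)

/-- One step: a mutation (in one of the three coordinates, with the sign
conventions preserving the equation `x₁² − x₂² + x₃² − x₁x₂x₃ = −4`) or a
sign change of two coordinates. -/
def MutStep : ℤ × ℤ × ℤ → ℤ × ℤ × ℤ → Prop := fun p q =>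
  q = (p.2.1 * p.2.2 - p.1, p.2.1, p.2.2) ∨
  q = (p.1, -(p.1 * p.2.2) - p.2.1, p.2.2) ∨
  q = (p.1, p.2.1, p.1 * p.2.1 - p.2.2) ∨
  q = (-p.1, -p.2.1, p.2.2) ∨
  q = (-p.1, p.2.1, -p.2.2) ∨
  q = (p.1, -p.2.1, -p.2.2)

open scoped goldenRatio
open Relation

lemma fibZ_eq_fib : ∀ n : ℤ, fibZ n = Int.fib n
  | Int.ofNat _ => rfl
  | Int.negSucc n => by
    show (-1) ^ n * (Nat.fib (n + 1) : ℤ) = _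
    rw [Int.negSucc_eq, ← Nat.cast_succ, Int.fib_neg_natCast, pow_succ, pow_succ]
    ring

lemma coe_lucZ_eq (n : ℤ) : (lucZ n : ℝ) = φ ^ n + ψ ^ n := by
  rw [lucZ, Int.cast_add, fibZ_eq_fib, fibZ_eq_fib, Real.coe_intFib_eq, Real.coe_intFib_eq,
    zpow_sub_one₀ Real.goldenRatio_ne_zero, zpow_sub_one₀ Real.goldenConj_ne_zero,
    zpow_add_one₀ Real.goldenRatio_ne_zero, zpow_add_one₀ Real.goldenConj_ne_zero,
    Real.inv_goldenRatio, Real.inv_goldenConj, ← add_div,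
    div_eq_iff (by positivity), ← Real.goldenRatio_sub_goldenConj]
  ring

lemma lucZ_neg (n : ℤ) : lucZ (-n) = n.negOnePow * lucZ n := by
  have hneg (x : ℝ) : (-x) ^ n = (-1) ^ n * x ^ n := by rw [neg_eq_neg_one_mul, mul_zpow]
  apply Int.cast_injective (α := ℝ)
  push_cast [coe_lucZ_eq, Int.cast_negOnePow]
  rw [zpow_neg, zpow_neg, ← inv_zpow, ← inv_zpow, Real.inv_goldenRatio, Real.inv_goldenConj,
    hneg ψ, hneg φ]
  ring

lemma lucZ_mul_lucZ (m n : ℤ) : lucZ m * lucZ n = lucZ (m + n) + n.negOnePow * lucZ (m - n) := by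
  have hφ : φ ^ m * ψ ^ n = (-1) ^ n * φ ^ (m - n) := by
    rw [← Real.goldenRatio_mul_goldenConj, mul_zpow, mul_comm (φ ^ n), mul_assoc,
      mul_comm (φ ^ m), ← zpow_add₀ Real.goldenRatio_ne_zero, add_sub_cancel]
  have hψ : ψ ^ m * φ ^ n = (-1) ^ n * ψ ^ (m - n) := by
    rw [← Real.goldenConj_mul_goldenRatio, mul_zpow, mul_comm (ψ ^ n), mul_assoc,
      mul_comm (ψ ^ m), ← zpow_add₀ Real.goldenConj_ne_zero, add_sub_cancel]
  apply Int.cast_injective (α := ℝ)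
  push_cast [coe_lucZ_eq, Int.cast_negOnePow, zpow_add₀ Real.goldenRatio_ne_zero,
    zpow_add₀ Real.goldenConj_ne_zero]
  linear_combination hφ + hψ

lemma lucZ_neg_of_odd {n : ℤ} (hn : Odd n) : lucZ (-n) = -lucZ n := by
  simp [lucZ_neg, Int.negOnePow_odd _ hn]

lemma lucZ_neg_of_even {n : ℤ} (hn : Even n) : lucZ (-n) = lucZ n := by
  simp [lucZ_neg, Int.negOnePow_even _ hn]

lemma lucZ_mul_lucZ_of_odd (m : ℤ) {n : ℤ} (hn : Odd n) :
    lucZ m * lucZ n = lucZ (m + n) - lucZ (m - n) := by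
  simp [lucZ_mul_lucZ, Int.negOnePow_odd _ hn, sub_eq_add_neg]

lemma lucZ_mul_lucZ_of_even (m : ℤ) {n : ℤ} (hn : Even n) :
    lucZ m * lucZ n = lucZ (m + n) + lucZ (m - n) := by
  simp [lucZ_mul_lucZ, Int.negOnePow_even _ hn]

lemma mutStep_mutate₁ {x y z x' : ℤ} (h : x' = y * z - x) : MutStep (x, y, z) (x', y, z) :=
  Or.inl (by rw [h])

lemma mutStep_mutate₂ {x y z y' : ℤ} (h : y' = -(x * z) - y) : MutStep (x, y, z) (x, y', z) :=
  Or.inr <| Or.inl (by rw [h])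

lemma mutStep_mutate₃ {x y z z' : ℤ} (h : z' = x * y - z) : MutStep (x, y, z) (x, y, z') :=
  Or.inr <| Or.inr <| Or.inl (by rw [h])

lemma mutStep_neg₁₂ {x y z x' y' : ℤ} (hx : x' = -x) (hy : y' = -y) :
    MutStep (x, y, z) (x', y', z) :=
  Or.inr <| Or.inr <| Or.inr <| Or.inl (by rw [hx, hy])

lemma mutStep_neg₂₃ {x y z y' z' : ℤ} (hy : y' = -y) (hz : z' = -z) :
    MutStep (x, y, z) (x, y', z') :=
  Or.inr <| Or.inr <| Or.inr <| Or.inr <| Or.inr (by rw [hy, hz])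

/-- The triple `(L_a, −ε L_{a+εb}, L_b)` at `ε = -1`. -/
def lucasTriple (a b : ℤ) : ℤ × ℤ × ℤ := (lucZ a, lucZ (a - b), lucZ b)

lemma lucasTriple_one_one : lucasTriple 1 1 = (1, 2, 1) := rfl

section Moves

variable {a b : ℤ}

lemma mutStep_lucasTriple (hb : Odd b) :
    MutStep (lucasTriple a b) (lucZ a, -lucZ (a + b), lucZ b) :=
  mutStep_mutate₂ (by linear_combination lucZ_mul_lucZ_of_odd a hb)

lemma mutStep_to_lucasTriple (hb : Odd b) :
    MutStep (lucZ a, -lucZ (a + b), lucZ b) (lucasTriple a b) :=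
  mutStep_mutate₂ (by linear_combination lucZ_mul_lucZ_of_odd a hb)

lemma reflTransGen_lucasTriple_neg_left (ha : Odd a) (hb : Odd b) :
    ReflTransGen MutStep (lucasTriple a b) (lucasTriple (-a) b) :=
  .head (mutStep_lucasTriple hb) <| .single <| mutStep_neg₁₂ (lucZ_neg_of_odd ha)
    (by rw [← neg_add', lucZ_neg_of_even (ha.add_odd hb), neg_neg])

lemma reflTransGen_lucasTriple_neg_right (hb : Odd b) :
    ReflTransGen MutStep (lucasTriple a b) (lucasTriple a (-b)) :=
  .head (mutStep_lucasTriple hb) <| .single <| mutStep_neg₂₃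
    (by rw [sub_neg_eq_add, neg_neg]) (lucZ_neg_of_odd hb)

lemma reflTransGen_lucasTriple_abs (ha : Odd a) (hb : Odd b) :
    ReflTransGen MutStep (lucasTriple a b) (lucasTriple |a| |b|) := by
  have hleft : ReflTransGen MutStep (lucasTriple a b) (lucasTriple |a| b) := by
    rcases abs_choice a with h | h
    · rw [h]
    · rw [h]; exact reflTransGen_lucasTriple_neg_left ha hb
  refine hleft.trans ?_
  rcases abs_choice b with h | h
  · rw [h]
  · rw [h]; exact reflTransGen_lucasTriple_neg_right hb

lemma reflTransGen_lucasTriple_sub_left (hb : Odd b) :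
    ReflTransGen MutStep (lucasTriple a b) (lucasTriple (a - 2 * b) b) :=
  .head (mutStep_mutate₁ (x' := -lucZ (a - 2 * b)) (by
      rw [lucZ_mul_lucZ_of_odd _ hb, sub_add_cancel, show a - b - b = a - 2 * b by ring]; ring)) <|
    .head (mutStep_neg₁₂ (neg_neg _).symm (by rw [show a - 2 * b + b = a - b by ring])) <|
    .single (mutStep_to_lucasTriple hb)

lemma reflTransGen_lucasTriple_sub_right (ha : Odd a) (hb : Odd b) :
    ReflTransGen MutStep (lucasTriple a b) (lucasTriple a (b - 2 * a)) :=
  have hb' : Odd (b - 2 * a) := hb.sub_even (even_two_mul a)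
  have hab : Even (a - b) := ha.sub_odd hb
  .head (mutStep_mutate₃ (z' := -lucZ (b - 2 * a)) (by
      rw [lucZ_mul_lucZ_of_even _ hab, ← lucZ_neg_of_odd hb']; ring_nf)) <|
    .head (mutStep_neg₂₃ (by rw [show a + (b - 2 * a) = -(a - b) by ring,
      lucZ_neg_of_even hab]) (neg_neg _).symm) <|
    .single (mutStep_to_lucasTriple hb')

end Moves

theorem reflTransGen_lucasTriple_one_one {a b : ℤ} (ha : Odd a) (hb : Odd b)
    (hab : IsCoprime a b) :
    ReflTransGen MutStep (lucasTriple a b) (lucasTriple 1 1) := by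
  refine (reflTransGen_lucasTriple_abs ha hb).trans ?_
  have ha' : Odd |a| := odd_abs.mpr ha
  have hb' : Odd |b| := odd_abs.mpr hb
  have hab' : IsCoprime |a| |b| := hab.abs_abs
  have ha0 : 0 < |a| := abs_pos.mpr (by rintro rfl; simp at ha)
  have hb0 : 0 < |b| := abs_pos.mpr (by rintro rfl; simp at hb)
  rcases lt_trichotomy |a| |b| with h | h | h
  · exact (reflTransGen_lucasTriple_sub_right ha' hb').trans
      (reflTransGen_lucasTriple_one_one ha' (hb'.sub_even (even_two_mul _))
        (IsCoprime.sub_mul_right_right_iff.mpr hab'))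
  · have h1 : |a| = 1 := by
      rw [← h, isCoprime_self, Int.isUnit_iff_abs_eq, abs_abs] at hab'
      exact hab'
    rw [← h, h1]
  · exact (reflTransGen_lucasTriple_sub_left hb').trans
      (reflTransGen_lucasTriple_one_one (ha'.sub_even (even_two_mul _)) hb'
        (IsCoprime.sub_mul_right_left_iff.mpr hab'))
termination_by a.natAbs + b.natAbs
decreasing_by all_goals simp only [Int.abs_eq_natAbs] at *; omega

/-- every triple `(L_a, −ε·L_{a+εb}, L_b)` with `a, b` odd and
coprime and `ε = ±1` can be transformed into `(1, 2, 1)` by a finite sequence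
of mutations and sign changes. -/
theorem stmt17 (a b ε : ℤ) (ha : Odd a) (hb : Odd b) (hab : IsCoprime a b)
    (hε : ε = 1 ∨ ε = -1) :
    Relation.ReflTransGen MutStep
      (lucZ a, -ε * lucZ (a + ε * b), lucZ b) (1, 2, 1) := by
  have h := lucasTriple_one_one ▸ reflTransGen_lucasTriple_one_one ha hb hab
  rcases hε with rfl | rfl
  · simpa using h.head (mutStep_to_lucasTriple hb)
  · simpa [lucasTriple, sub_eq_add_neg] using h
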